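/- arXiv:2209.14604 — 3 statements merged into one kernel-verified Lean document; each statement's English description precedes it below -/
import Mathlib

section
/- Let μ be the 2-dimensional Hausdorff measure on ℝ³, let S² = {p ∈ ℝ³ : ‖p‖ = 1}, and let F = {p ∈ S² : |p₁| ≤ p₃ and |p₂| ≤ p₃}. Then μ(F) = μ(S²)/6; i.e., the spherical face F occupies exactly one sixth of the area of the sphere. -/
open MeasureTheory Set Real

local notation "E3" => EuclideanSpace ℝ (Fin 3)

/-! ### Signed permutations of coordinates are isometries -/

noncomputable def spmap (σ : Equiv.Perm (Fin 3)) (ε : Fin 3 → ℝ) : E3 → E3 :=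
  fun p => WithLp.toLp 2 (fun i => ε i * p (σ i) : Fin 3 → ℝ)

lemma spmap_apply (σ : Equiv.Perm (Fin 3)) (ε : Fin 3 → ℝ) (p : E3) (i : Fin 3) :
    spmap σ ε p i = ε i * p (σ i) := rfl

lemma spmap_isometry (σ : Equiv.Perm (Fin 3)) (ε : Fin 3 → ℝ) (hε : ∀ i, |ε i| = 1) :
    Isometry (spmap σ ε) := by
  apply Isometry.of_dist_eq
  intro p q
  rw [EuclideanSpace.dist_eq, EuclideanSpace.dist_eq]
  congr 1
  rw [← Equiv.sum_comp σ (fun i => dist (p i) (q i) ^ 2)]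
  refine Finset.sum_congr rfl fun i _ => ?_
  simp only [spmap_apply, Real.dist_eq, ← mul_sub, abs_mul, hε i, one_mul]

lemma spmap_norm (σ : Equiv.Perm (Fin 3)) (ε : Fin 3 → ℝ) (hε : ∀ i, |ε i| = 1) (p : E3) :
    ‖spmap σ ε p‖ = ‖p‖ := by
  have h0 : spmap σ ε 0 = 0 := by
    ext i
    simp [spmap]
  calc ‖spmap σ ε p‖ = dist (spmap σ ε p) (spmap σ ε 0) := by rw [h0, dist_zero_right]
    _ = dist p 0 := (spmap_isometry σ ε hε).dist_eq p 0
    _ = ‖p‖ := dist_zero_right p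

/-! ### The six closed/open faces of the sphere -/

def Face (j : Fin 3) (e : ℝ) : Set E3 := {p | ‖p‖ = 1 ∧ ∀ i, |p i| ≤ e * p j}
def OFace (j : Fin 3) (e : ℝ) : Set E3 := {p | ‖p‖ = 1 ∧ ∀ i, i ≠ j → |p i| < e * p j}

lemma he_abs {e : ℝ} (he : e = 1 ∨ e = -1) : |e| = 1 := by rcases he with h | h <;> simp [h]
lemma he_sq {e : ℝ} (he : e = 1 ∨ e = -1) : e * e = 1 := by rcases he with h | h <;> norm_num [h]

section
variable {j : Fin 3} {e : ℝ}

lemma swap_ne_two {i : Fin 3} (h : i ≠ j) : Equiv.swap j 2 i ≠ 2 := by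
  intro hc
  exact h ((Equiv.swap j 2).injective (hc.trans (Equiv.swap_apply_left j 2).symm))

lemma swap_ne_j {i : Fin 3} (h : i ≠ 2) : Equiv.swap j 2 i ≠ j := by
  intro hc
  exact h ((Equiv.swap j 2).injective (hc.trans (Equiv.swap_apply_right j 2).symm))

lemma mem_face_of (he : e = 1 ∨ e = -1) {q : E3} (hq : q ∈ Face 2 1) :
    spmap (Equiv.swap j 2) (fun _ => e) q ∈ Face j e := by
  refine ⟨spmap_norm _ _ (fun _ => he_abs he) q |>.trans hq.1, fun i => ?_⟩
  have h2 : e * spmap (Equiv.swap j 2) (fun _ => e) q j = q 2 := by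
    rw [spmap_apply, Equiv.swap_apply_left, ← mul_assoc, he_sq he, one_mul]
  rw [h2, spmap_apply, abs_mul, he_abs he, one_mul]
  simpa using hq.2 (Equiv.swap j 2 i)

lemma mem_face_to (he : e = 1 ∨ e = -1) {p : E3} (hp : p ∈ Face j e) :
    spmap (Equiv.swap j 2) (fun _ => e) p ∈ Face 2 1 := by
  refine ⟨spmap_norm _ _ (fun _ => he_abs he) p |>.trans hp.1, fun i => ?_⟩
  have h2 : (1:ℝ) * spmap (Equiv.swap j 2) (fun _ => e) p 2 = e * p j := by
    rw [spmap_apply, Equiv.swap_apply_right, one_mul]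
  rw [h2, spmap_apply, abs_mul, he_abs he, one_mul]
  exact hp.2 (Equiv.swap j 2 i)

lemma mem_oface_of (he : e = 1 ∨ e = -1) {q : E3} (hq : q ∈ OFace 2 1) :
    spmap (Equiv.swap j 2) (fun _ => e) q ∈ OFace j e := by
  refine ⟨spmap_norm _ _ (fun _ => he_abs he) q |>.trans hq.1, fun i hi => ?_⟩
  have h2 : e * spmap (Equiv.swap j 2) (fun _ => e) q j = q 2 := by
    rw [spmap_apply, Equiv.swap_apply_left, ← mul_assoc, he_sq he, one_mul]
  rw [h2, spmap_apply, abs_mul, he_abs he, one_mul]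
  simpa using hq.2 (Equiv.swap j 2 i) (swap_ne_two hi)

lemma mem_oface_to (he : e = 1 ∨ e = -1) {p : E3} (hp : p ∈ OFace j e) :
    spmap (Equiv.swap j 2) (fun _ => e) p ∈ OFace 2 1 := by
  refine ⟨spmap_norm _ _ (fun _ => he_abs he) p |>.trans hp.1, fun i hi => ?_⟩
  have h2 : (1:ℝ) * spmap (Equiv.swap j 2) (fun _ => e) p 2 = e * p j := by
    rw [spmap_apply, Equiv.swap_apply_right, one_mul]
  rw [h2, spmap_apply, abs_mul, he_abs he, one_mul]
  exact hp.2 (Equiv.swap j 2 i) (swap_ne_j hi)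

lemma spmap_invol (he : e = 1 ∨ e = -1) (p : E3) :
    spmap (Equiv.swap j 2) (fun _ => e) (spmap (Equiv.swap j 2) (fun _ => e) p) = p := by
  ext i
  rw [spmap_apply, spmap_apply, Equiv.swap_apply_self, ← mul_assoc, he_sq he, one_mul]

lemma face_image (he : e = 1 ∨ e = -1) :
    Face j e = spmap (Equiv.swap j 2) (fun _ => e) '' Face 2 1 := by
  ext p
  constructor
  · intro hp
    exact ⟨_, mem_face_to he hp, spmap_invol he p⟩
  · rintro ⟨q, hq, rfl⟩
    exact mem_face_of he hq

lemma oface_image (he : e = 1 ∨ e = -1) :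
    OFace j e = spmap (Equiv.swap j 2) (fun _ => e) '' OFace 2 1 := by
  ext p
  constructor
  · intro hp
    exact ⟨_, mem_oface_to he hp, spmap_invol he p⟩
  · rintro ⟨q, hq, rfl⟩
    exact mem_oface_of he hq

lemma face_measure (he : e = 1 ∨ e = -1) : μH[2] (Face j e) = μH[2] (Face 2 1) := by
  rw [face_image he]
  exact (spmap_isometry _ _ fun _ => he_abs he).hausdorffMeasure_image (Or.inl (by norm_num)) _

lemma oface_measure (he : e = 1 ∨ e = -1) : μH[2] (OFace j e) = μH[2] (OFace 2 1) := by
  rw [oface_image he]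
  exact (spmap_isometry _ _ fun _ => he_abs he).hausdorffMeasure_image (Or.inl (by norm_num)) _

lemma oface_pos {p : E3} (hp : p ∈ OFace j e) : 0 < e * p j := by
  obtain ⟨i, hi⟩ := exists_ne j
  exact lt_of_le_of_lt (abs_nonneg _) (hp.2 i hi)

lemma oface_subset (he : e = 1 ∨ e = -1) : OFace j e ⊆ Face j e := by
  intro p hp
  refine ⟨hp.1, fun i => ?_⟩
  rcases eq_or_ne i j with rfl | hi
  · have : |p i| = e * p i := by
      rw [← abs_of_pos (oface_pos hp), abs_mul, he_abs he, one_mul]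
    exact this.le
  · exact (hp.2 i hi).le

end

/-! ### Null sets: circles on the sphere -/

lemma exists_cos_sin {c s : ℝ} (h : c ^ 2 + s ^ 2 = 1) :
    ∃ t, Real.cos t = c ∧ Real.sin t = s := by
  have hc1 : -1 ≤ c := by nlinarith [sq_nonneg s]
  have hc2 : c ≤ 1 := by nlinarith [sq_nonneg s]
  have hs2 : 1 - c ^ 2 = s ^ 2 := by linarith
  rcases le_or_gt 0 s with hs | hs
  · exact ⟨Real.arccos c, Real.cos_arccos hc1 hc2, by
      rw [Real.sin_arccos, hs2, Real.sqrt_sq hs]⟩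
  · refine ⟨-Real.arccos c, by rw [Real.cos_neg]; exact Real.cos_arccos hc1 hc2, ?_⟩
    rw [Real.sin_neg, Real.sin_arccos, hs2, Real.sqrt_sq_eq_abs, abs_of_neg hs, neg_neg]

lemma lipschitz_cos : LipschitzWith 1 Real.cos := by
  apply lipschitzWith_of_nnnorm_deriv_le Real.differentiable_cos
  intro x
  rw [Real.deriv_cos', ← NNReal.coe_le_coe, coe_nnnorm, NNReal.coe_one, Real.norm_eq_abs,
    abs_neg]
  exact Real.abs_sin_le_one x

lemma lipschitz_sin : LipschitzWith 1 Real.sin := by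
  apply lipschitzWith_of_nnnorm_deriv_le Real.differentiable_sin
  intro x
  rw [Real.deriv_sin, ← NNReal.coe_le_coe, coe_nnnorm, NNReal.coe_one, Real.norm_eq_abs]
  exact Real.abs_cos_le_one x

lemma hausdorff_two_real_null : μH[2] (univ : Set ℝ) = 0 := by
  have h : dimH (univ : Set ℝ) < (2 : NNReal) := by
    rw [Real.dimH_univ]
    norm_num
  simpa using hausdorffMeasure_of_dimH_lt h

lemma ellipse_null (v w : E3) :
    μH[2] {p : E3 | ∃ c s : ℝ, c ^ 2 + s ^ 2 = 1 ∧ p = c • v + s • w} = 0 := by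
  set h : ℝ → E3 := fun t => Real.cos t • v + Real.sin t • w with hh
  have hsub : {p : E3 | ∃ c s : ℝ, c ^ 2 + s ^ 2 = 1 ∧ p = c • v + s • w} ⊆ range h := by
    rintro p ⟨c, s, hcs, rfl⟩
    obtain ⟨t, hct, hst⟩ := exists_cos_sin hcs
    exact ⟨t, by rw [hh]; simp only [hct, hst]⟩
  have lip : LipschitzWith (‖v‖₊ + ‖w‖₊) h := by
    apply LipschitzWith.of_dist_le_mul
    intro a b
    have key : h a - h b = (Real.cos a - Real.cos b) • v + (Real.sin a - Real.sin b) • w := by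
      rw [hh]; module
    have h1 : dist (h a) (h b) ≤ |Real.cos a - Real.cos b| * ‖v‖ + |Real.sin a - Real.sin b| * ‖w‖ := by
      rw [dist_eq_norm, key]
      exact (norm_add_le _ _).trans (by rw [norm_smul, norm_smul, Real.norm_eq_abs, Real.norm_eq_abs])
    have h2 : |Real.cos a - Real.cos b| ≤ dist a b := by
      simpa [Real.dist_eq] using lipschitz_cos.dist_le_mul a b
    have h3 : |Real.sin a - Real.sin b| ≤ dist a b := by
      simpa [Real.dist_eq] using lipschitz_sin.dist_le_mul a b
    calc dist (h a) (h b) ≤ |Real.cos a - Real.cos b| * ‖v‖ + |Real.sin a - Real.sin b| * ‖w‖ := h1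
      _ ≤ dist a b * ‖v‖ + dist a b * ‖w‖ :=
          add_le_add (mul_le_mul_of_nonneg_right h2 (norm_nonneg v))
            (mul_le_mul_of_nonneg_right h3 (norm_nonneg w))
      _ = ((‖v‖₊ + ‖w‖₊ : NNReal) : ℝ) * dist a b := by push_cast [coe_nnnorm]; ring
  refine le_antisymm ?_ zero_le
  calc μH[2] {p : E3 | ∃ c s : ℝ, c ^ 2 + s ^ 2 = 1 ∧ p = c • v + s • w}
      ≤ μH[2] (h '' univ) := by rw [image_univ]; exact measure_mono hsub
    _ ≤ ((‖v‖₊ + ‖w‖₊ : NNReal) : ENNReal) ^ (2:ℝ) * μH[2] (univ : Set ℝ) :=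
        lip.hausdorffMeasure_image_le (by norm_num) _
    _ = 0 := by rw [hausdorff_two_real_null, mul_zero]

lemma sum_sq_eq_one {p : E3} (hp : ‖p‖ = 1) : p 0 ^ 2 + p 1 ^ 2 + p 2 ^ 2 = 1 := by
  have h := hp
  rw [EuclideanSpace.norm_eq, Real.sqrt_eq_one] at h
  simpa [Fin.sum_univ_three, Real.norm_eq_abs, sq_abs] using h

lemma circle_null : μH[2] {p : E3 | ‖p‖ = 1 ∧ p 0 = p 2} = 0 := by
  set v : E3 := WithLp.toLp 2 (fun m => if m = 1 then 1 else 0 : Fin 3 → ℝ) with hv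
  set w : E3 := WithLp.toLp 2 (fun m => if m = 1 then 0 else 1 / Real.sqrt 2 : Fin 3 → ℝ) with hw
  refine le_antisymm ?_ zero_le
  rw [← ellipse_null v w]
  apply measure_mono
  rintro p ⟨hp1, hp2⟩
  have hsq : p 0 ^ 2 + p 1 ^ 2 + p 2 ^ 2 = 1 := sum_sq_eq_one hp1
  have h2 : Real.sqrt 2 ≠ 0 := by positivity
  have h22 : Real.sqrt 2 * Real.sqrt 2 = 2 := Real.mul_self_sqrt (by norm_num)
  have hs2 : (Real.sqrt 2 * p 2) ^ 2 = 2 * p 2 ^ 2 := by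
    rw [mul_pow, Real.sq_sqrt (by norm_num : (0:ℝ) ≤ 2)]
  refine ⟨p 1, Real.sqrt 2 * p 2, ?_, ?_⟩
  · rw [hs2]; rw [hp2] at hsq; linarith
  · ext m
    have : ∀ m, (p 1 • v + (Real.sqrt 2 * p 2) • w) m
        = p 1 * v m + (Real.sqrt 2 * p 2) * w m := fun m => rfl
    rw [this m]
    fin_cases m <;> simp [hv, hw] <;> field_simp <;> nlinarith [h22, hp2]

lemma circle_null' (σ : Equiv.Perm (Fin 3)) (ε ε' : Fin 3 → ℝ) (hε : ∀ i, |ε i| = 1)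
    (hε' : ∀ i, |ε' i| = 1) (S : Set E3)
    (hS : ∀ p ∈ S, ‖p‖ = 1 ∧ spmap σ ε' p 0 = spmap σ ε' p 2
      ∧ spmap σ.symm ε (spmap σ ε' p) = p) :
    μH[2] S = 0 := by
  refine le_antisymm ?_ zero_le
  rw [← circle_null,
    ← (spmap_isometry σ.symm ε hε).hausdorffMeasure_image (Or.inl (by norm_num))
      {p : E3 | ‖p‖ = 1 ∧ p 0 = p 2}]
  apply measure_mono
  intro p hp
  obtain ⟨h1, h2, h3⟩ := hS p hp
  exact ⟨spmap σ ε' p, ⟨(spmap_norm σ ε' hε' p).trans h1, h2⟩, h3⟩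

lemma circle2_null : μH[2] {p : E3 | ‖p‖ = 1 ∧ p 0 = -p 2} = 0 := by
  apply circle_null' (Equiv.refl _) ![-1,1,1] ![-1,1,1]
    (by intro i; fin_cases i <;> norm_num) (by intro i; fin_cases i <;> norm_num)
  rintro p ⟨h1, h2⟩
  refine ⟨h1, ?_, ?_⟩
  · simp only [spmap_apply]
    simp [h2]
  · ext i
    simp only [spmap_apply]
    fin_cases i <;> simp

lemma circle3_null : μH[2] {p : E3 | ‖p‖ = 1 ∧ p 1 = p 2} = 0 := by
  apply circle_null' (Equiv.swap 0 1) ![1,1,1] ![1,1,1]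
    (by intro i; fin_cases i <;> norm_num) (by intro i; fin_cases i <;> norm_num)
  rintro p ⟨h1, h2⟩
  refine ⟨h1, ?_, ?_⟩
  · simp only [spmap_apply]
    simp [Equiv.swap_apply_def, h2]
  · ext i
    simp only [spmap_apply]
    fin_cases i <;> simp [Equiv.swap_apply_def]

lemma circle4_null : μH[2] {p : E3 | ‖p‖ = 1 ∧ p 1 = -p 2} = 0 := by
  apply circle_null' (Equiv.swap 0 1) ![1,-1,1] ![-1,1,1]
    (by intro i; fin_cases i <;> norm_num) (by intro i; fin_cases i <;> norm_num)
  rintro p ⟨h1, h2⟩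
  refine ⟨h1, ?_, ?_⟩
  · simp only [spmap_apply]
    simp [Equiv.swap_apply_def, h2]
  · ext i
    simp only [spmap_apply]
    fin_cases i <;> simp [Equiv.swap_apply_def]

lemma boundary_null : μH[2] (Face 2 1 \ OFace 2 1) = 0 := by
  refine le_antisymm ?_ zero_le
  have hsub : Face 2 1 \ OFace 2 1 ⊆
      ({p : E3 | ‖p‖ = 1 ∧ p 0 = p 2} ∪ {p : E3 | ‖p‖ = 1 ∧ p 0 = -p 2}) ∪
      ({p : E3 | ‖p‖ = 1 ∧ p 1 = p 2} ∪ {p : E3 | ‖p‖ = 1 ∧ p 1 = -p 2}) := by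
    rintro p ⟨⟨h1, h2⟩, h3⟩
    have hnot : ¬ ∀ i, i ≠ (2:Fin 3) → |p i| < 1 * p 2 := fun h => h3 ⟨h1, h⟩
    push_neg at hnot
    obtain ⟨i, hi, hge⟩ := hnot
    have heq : |p i| = p 2 := le_antisymm (by simpa using h2 i) (by simpa using hge)
    have hp2 : 0 ≤ p 2 := (abs_nonneg (p i)).trans heq.le
    rw [abs_eq hp2] at heq
    fin_cases i
    · rcases heq with h | h
      · exact Or.inl (Or.inl ⟨h1, h⟩)
      · exact Or.inl (Or.inr ⟨h1, h⟩)
    · rcases heq with h | h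
      · exact Or.inr (Or.inl ⟨h1, h⟩)
      · exact Or.inr (Or.inr ⟨h1, h⟩)
    · exact absurd rfl hi
  refine (measure_mono hsub).trans ?_
  refine (measure_union_le _ _).trans ?_
  rw [show (0:ENNReal) = 0 + 0 by simp]
  exact add_le_add ((measure_union_le _ _).trans (by rw [circle_null, circle2_null, add_zero]))
    ((measure_union_le _ _).trans (by rw [circle3_null, circle4_null, add_zero]))

/-! ### Measurability, covering, disjointness -/

lemma coord_continuous (i : Fin 3) : Continuous fun p : E3 => p i :=
  (EuclideanSpace.proj i).continuous

lemma oface_meas (j : Fin 3) (e : ℝ) : MeasurableSet (OFace j e) := by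
  have h1 : MeasurableSet {p : E3 | ‖p‖ = 1} :=
    (isClosed_eq continuous_norm continuous_const).measurableSet
  have heq : OFace j e = {p : E3 | ‖p‖ = 1} ∩ ⋂ (i) (_ : i ≠ j), {p : E3 | |p i| < e * p j} := by
    ext p
    constructor
    · rintro ⟨ha, hb⟩
      exact ⟨ha, mem_iInter.2 fun i => mem_iInter.2 fun hi => hb i hi⟩
    · rintro ⟨ha, hb⟩
      exact ⟨ha, fun i hi => mem_iInter.1 (mem_iInter.1 hb i) hi⟩
  rw [heq]
  exact h1.inter (MeasurableSet.iInter fun i => MeasurableSet.iInter fun hi =>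
    (isOpen_lt (continuous_abs.comp (coord_continuous i))
      (continuous_const.mul (coord_continuous j))).measurableSet)

lemma sphere_subset :
    {p : E3 | ‖p‖ = 1} ⊆ ⋃ j : Fin 3, (Face j 1 ∪ Face j (-1)) := by
  intro p hp
  obtain ⟨j, -, hj⟩ := Finset.exists_max_image (Finset.univ : Finset (Fin 3))
    (fun i => |p i|) ⟨0, Finset.mem_univ 0⟩
  rw [mem_iUnion]
  rcases le_or_gt 0 (p j) with h | h
  · exact ⟨j, Or.inl ⟨hp, fun i => by
      rw [one_mul, ← abs_of_nonneg h]; exact hj i (Finset.mem_univ i)⟩⟩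
  · exact ⟨j, Or.inr ⟨hp, fun i => by
      have := hj i (Finset.mem_univ i)
      rw [abs_of_neg h] at this
      linarith [this]⟩⟩

noncomputable def OF : Fin 3 × Bool → Set E3 := fun x => OFace x.1 (if x.2 then 1 else -1)

lemma OF_disjoint : Pairwise (Function.onFun Disjoint OF) := by
  rintro ⟨j, b⟩ ⟨j', b'⟩ hne
  rw [Function.onFun, Set.disjoint_left]
  intro p hp hp'
  set e := if b then (1:ℝ) else -1 with he
  set e' := if b' then (1:ℝ) else -1 with he'
  have habs : |e| = 1 := by rcases b <;> simp [he]
  have habs' : |e'| = 1 := by rcases b' <;> simp [he']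
  have h1 : 0 < e * p j := oface_pos hp
  have h1' : 0 < e' * p j' := oface_pos hp'
  rcases eq_or_ne j j' with rfl | hjj'
  · have hbb' : b ≠ b' := fun h => hne (by rw [h])
    have : e = -e' := by rcases b <;> rcases b' <;> simp_all [he, he']
    rw [this] at h1
    linarith
  · have h2 : |p j'| < e * p j := hp.2 j' (Ne.symm hjj')
    have h2' : |p j| < e' * p j' := hp'.2 j hjj'
    have h3 : e * p j ≤ |p j| := by
      calc e * p j ≤ |e * p j| := le_abs_self _
        _ = |p j| := by rw [abs_mul, habs, one_mul]
    have h3' : e' * p j' ≤ |p j'| := by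
      calc e' * p j' ≤ |e' * p j'| := le_abs_self _
        _ = |p j'| := by rw [abs_mul, habs', one_mul]
    linarith

/-- The spherical face `F = {p ∈ S² : |p₁| ≤ p₃, |p₂| ≤ p₃}` occupies exactly one
sixth of the area of the unit sphere, with respect to the 2-dimensional Hausdorff
measure on ℝ³. -/
theorem face_area_eq_sixth_of_sphere :
    μH[2] ({p : EuclideanSpace ℝ (Fin 3) | ‖p‖ = 1 ∧ |p 0| ≤ p 2 ∧ |p 1| ≤ p 2})
      = μH[2] ({p : EuclideanSpace ℝ (Fin 3) | ‖p‖ = 1}) / 6 := by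
  have hset : {p : E3 | ‖p‖ = 1 ∧ |p 0| ≤ p 2 ∧ |p 1| ≤ p 2} = Face 2 1 := by
    ext p
    constructor
    · rintro ⟨h1, h2, h3⟩
      refine ⟨h1, fun i => ?_⟩
      have hp2 : 0 ≤ p 2 := (abs_nonneg _).trans h2
      fin_cases i
      · simpa using h2
      · simpa using h3
      · simpa [abs_of_nonneg hp2] using hp2.le
    · rintro ⟨h1, h⟩
      exact ⟨h1, by simpa using h 0, by simpa using h 1⟩
  set f := μH[2] (Face (2:Fin 3) (1:ℝ)) with hf
  set b := μH[2] (OFace (2:Fin 3) (1:ℝ)) with hb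
  have hfb : f ≤ b := by
    calc f ≤ μH[2] ((Face 2 1 \ OFace 2 1) ∪ OFace 2 1) :=
          measure_mono (subset_diff_union _ _)
      _ ≤ μH[2] (Face 2 1 \ OFace 2 1) + b := measure_union_le _ _
      _ = b := by rw [boundary_null, zero_add]
  have hbf : b ≤ f := measure_mono (oface_subset (Or.inl rfl))
  have hfb_eq : f = b := le_antisymm hfb hbf
  -- upper bound
  have hupper : μH[2] {p : E3 | ‖p‖ = 1} ≤ 6 * f := by
    calc μH[2] {p : E3 | ‖p‖ = 1}
        ≤ μH[2] (⋃ j : Fin 3, (Face j 1 ∪ Face j (-1))) := measure_mono sphere_subset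
      _ ≤ ∑' j : Fin 3, μH[2] (Face j 1 ∪ Face j (-1)) := measure_iUnion_le _
      _ ≤ ∑' j : Fin 3, (f + f) := by
          refine ENNReal.tsum_le_tsum fun j => ?_
          calc μH[2] (Face j 1 ∪ Face j (-1))
              ≤ μH[2] (Face j 1) + μH[2] (Face j (-1)) := measure_union_le _ _
            _ = f + f := by rw [face_measure (Or.inl rfl), face_measure (Or.inr rfl)]
      _ = 6 * f := by
          rw [tsum_fintype]
          simp [Fin.sum_univ_three]
          ring
  -- lower bound
  have hlower : 6 * b ≤ μH[2] {p : E3 | ‖p‖ = 1} := by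
    have hU : μH[2] (⋃ x, OF x) = ∑' x, μH[2] (OF x) :=
      measure_iUnion OF_disjoint fun x => oface_meas _ _
    have hOFb : ∀ x : Fin 3 × Bool, μH[2] (OF x) = b := by
      rintro ⟨j, bb⟩
      rcases bb with _ | _ <;>
        simpa [OF] using oface_measure (j := j) (by simp)
    have hsum : ∑' x : Fin 3 × Bool, μH[2] (OF x) = 6 * b := by
      rw [tsum_fintype]
      rw [Finset.sum_congr rfl fun x _ => hOFb x, Finset.sum_const]
      simp
    have hsubS : (⋃ x, OF x) ⊆ {p : E3 | ‖p‖ = 1} := by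
      rintro p hp
      rw [mem_iUnion] at hp
      obtain ⟨x, hx⟩ := hp
      exact hx.1
    calc 6 * b = μH[2] (⋃ x, OF x) := by rw [hU, hsum]
      _ ≤ μH[2] {p : E3 | ‖p‖ = 1} := measure_mono hsubS
  have hS : μH[2] {p : E3 | ‖p‖ = 1} = 6 * f := by
    refine le_antisymm hupper ?_
    rw [hfb_eq]
    exact hlower
  rw [hset, hS, ENNReal.eq_div_iff (by norm_num : (6:ENNReal) ≠ 0)
    (by norm_num : (6:ENNReal) ≠ ⊤)]
end

section
/- Let H be a real Hilbert space, let (e_k)_{k ∈ ι} be a countable family in H, and let c > 0. If for every f ∈ H the family (⟨f, e_k⟩²)_k is summable with Σ_k ⟨f, e_k⟩² = c·‖f‖², then for every f ∈ H the series Σ_k ⟨f, e_k⟩·e_k converges unconditionally in H and its sum equals c·f. -/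
open scoped RealInnerProductSpace

/-- Polarization: the Parseval identity implies the "tight frame" bilinear identity. -/
lemma tf_polarization {H : Type*}
    [NormedAddCommGroup H] [InnerProductSpace ℝ H]
    {ι : Type*} (e : ι → H) (c : ℝ)
    (hpar : ∀ f : H, HasSum (fun k => ⟪f, e k⟫ ^ 2) (c * ‖f‖ ^ 2))
    (f g : H) : HasSum (fun k => ⟪f, e k⟫ * ⟪g, e k⟫) (c * ⟪f, g⟫) := by
  have h := ((hpar (f + g)).sub (hpar (f - g))).div_const 4
  have hpt : ∀ k, (⟪f + g, e k⟫ ^ 2 - ⟪f - g, e k⟫ ^ 2) / 4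
      = ⟪f, e k⟫ * ⟪g, e k⟫ := by
    intro k
    rw [inner_add_left, inner_sub_left]
    ring
  have hval : (c * ‖f + g‖ ^ 2 - c * ‖f - g‖ ^ 2) / 4 = c * ⟪f, g⟫ := by
    rw [← real_inner_self_eq_norm_sq, ← real_inner_self_eq_norm_sq,
      inner_add_add_self, inner_sub_sub_self, real_inner_comm g f]
    ring
  rw [← hval]
  exact h.congr_fun fun k => (hpt k).symm

/-- Finite Bessel-type bound on the partial sums. -/
lemma tf_finset_bound {H : Type*}
    [NormedAddCommGroup H] [InnerProductSpace ℝ H]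
    {ι : Type*} (e : ι → H) (c : ℝ) (hc : 0 < c)
    (hpar : ∀ f : H, HasSum (fun k => ⟪f, e k⟫ ^ 2) (c * ‖f‖ ^ 2))
    (a : ι → ℝ) (t : Finset ι) :
    ‖∑ k ∈ t, a k • e k‖ ^ 2 ≤ c * ∑ k ∈ t, a k ^ 2 := by
  set S : H := ∑ k ∈ t, a k • e k with hS
  have h1 : ⟪S, S⟫ = ∑ k ∈ t, a k * ⟪S, e k⟫ := by
    conv_lhs => rw [hS]
    rw [sum_inner]
    exact Finset.sum_congr rfl fun k _ => by
      rw [real_inner_smul_left, real_inner_comm]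
  have hcs : (∑ k ∈ t, a k * ⟪S, e k⟫) ^ 2
      ≤ (∑ k ∈ t, a k ^ 2) * (∑ k ∈ t, ⟪S, e k⟫ ^ 2) :=
    Finset.sum_mul_sq_le_sq_mul_sq t a (fun k => ⟪S, e k⟫)
  have hbessel : (∑ k ∈ t, ⟪S, e k⟫ ^ 2) ≤ c * ‖S‖ ^ 2 :=
    sum_le_hasSum t (fun k _ => sq_nonneg _) (hpar S)
  have hA : (0:ℝ) ≤ ∑ k ∈ t, a k ^ 2 := by positivity
  have key : (‖S‖ ^ 2) ^ 2 ≤ (∑ k ∈ t, a k ^ 2) * (c * ‖S‖ ^ 2) := by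
    have : ‖S‖ ^ 2 = ⟪S, S⟫ := (real_inner_self_eq_norm_sq S).symm
    calc (‖S‖ ^ 2) ^ 2 = (∑ k ∈ t, a k * ⟪S, e k⟫) ^ 2 := by rw [this, h1]
      _ ≤ (∑ k ∈ t, a k ^ 2) * (∑ k ∈ t, ⟪S, e k⟫ ^ 2) := hcs
      _ ≤ (∑ k ∈ t, a k ^ 2) * (c * ‖S‖ ^ 2) := by
            exact mul_le_mul_of_nonneg_left hbessel hA
  rcases eq_or_lt_of_le (sq_nonneg ‖S‖) with h0 | h0
  · rw [← h0]
    positivity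
  · nlinarith

/-- If a countable family `(e_k)` in a real Hilbert space satisfies the Parseval-type
identity `Σ_k ⟪f, e_k⟫² = c·‖f‖²` for every `f`, then the reconstruction formula
`Σ_k ⟪f, e_k⟫ • e_k = c • f` holds for every `f`, the series converging
unconditionally in `H`. -/
theorem parseval_implies_tight_frame_reconstruction {H : Type*}
    [NormedAddCommGroup H] [InnerProductSpace ℝ H] [CompleteSpace H]
    {ι : Type*} [Countable ι] (e : ι → H) (c : ℝ) (hc : 0 < c)
    (hpar : ∀ f : H, HasSum (fun k => ⟪f, e k⟫ ^ 2) (c * ‖f‖ ^ 2)) :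
    ∀ f : H, HasSum (fun k => ⟪f, e k⟫ • e k) (c • f) := by
  intro f
  -- summability
  have hsum : Summable (fun k => ⟪f, e k⟫ • e k) := by
    rw [summable_iff_vanishing]
    intro U hU
    rcases Metric.mem_nhds_iff.1 hU with ⟨ε, hε, hball⟩
    have hsq : Summable (fun k => ⟪f, e k⟫ ^ 2) := (hpar f).summable
    have hvan := summable_iff_vanishing.1 hsq (Set.Iio (ε ^ 2 / c))
      (Iio_mem_nhds (by positivity))
    rcases hvan with ⟨s, hs⟩
    refine ⟨s, fun t ht => ?_⟩
    apply hball
    have h1 : ∑ k ∈ t, ⟪f, e k⟫ ^ 2 < ε ^ 2 / c := hs t ht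
    have h2 := tf_finset_bound e c hc hpar (fun k => ⟪f, e k⟫) t
    simp only [Metric.mem_ball, dist_zero_right]
    have h3 : c * (ε ^ 2 / c) = ε ^ 2 := by field_simp
    nlinarith [norm_nonneg (∑ k ∈ t, ⟪f, e k⟫ • e k),
      mul_lt_mul_of_pos_left h1 hc]
  have hS : HasSum (fun k => ⟪f, e k⟫ • e k) (∑' k, ⟪f, e k⟫ • e k) := hsum.hasSum
  set S : H := ∑' k, ⟪f, e k⟫ • e k with hSdef
  have hid : S = c • f := by
    apply ext_inner_left ℝ
    intro g
    have h1 : HasSum (fun k => ⟪g, ⟪f, e k⟫ • e k⟫) ⟪g, S⟫ := by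
      have := (innerSL ℝ g).hasSum hS
      exact this
    have h2 : HasSum (fun k => ⟪f, e k⟫ * ⟪g, e k⟫) (c * ⟪f, g⟫) :=
      tf_polarization e c hpar f g
    have heq : (fun k => ⟪g, ⟪f, e k⟫ • e k⟫) = fun k => ⟪f, e k⟫ * ⟪g, e k⟫ := by
      funext k
      rw [real_inner_smul_right]
    rw [heq] at h1
    have := h1.unique h2
    rw [this, real_inner_smul_right, real_inner_comm]
  rw [← hid]
  exact hS
end

section
/- Let H and K be real Hilbert spaces, let F : H → K be a continuous linear map that is an isometry (‖F x‖ = ‖x‖ for all x) with adjoint F*, and let Q : H → H be the orthogonal projection onto a closed subspace S of H. Let β₁, β₂ > 0, y, Λ₁ ∈ K, z, Λ₂ ∈ H, and g ∈ H. Set b = β₁·F* y + β₂·z + F* Λ₁ + Λ₂. Then the unique minimizer of x ↦ (β₁/2)·‖y − F x + (1/β₁)·Λ₁‖² + (β₂/2)·‖z − x + (1/β₂)·Λ₂‖² over the affine set {x ∈ H : Q x = Q g} is x* = Q g + (1/(β₁ + β₂))·(b − Q b). -/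
/-!
Expanding the squares, `J x' = J x + (β₁ + β₂)/2 ‖x' - x‖² - ⟪b - (β₁ + β₂) x, x' - x⟫`,
because `F*F = 1`. For `x = x*` the vector `b - (β₁ + β₂) x* = Q b - (β₁ + β₂) Q g` lies in `S`,
while every feasible increment `x' - x*` lies in `Sᗮ`; so the linear term vanishes and
`J x' = J x* + (β₁ + β₂)/2 ‖x' - x*‖²` on the constraint set.
-/

open scoped RealInnerProductSpace

open ContinuousLinearMap

section

variable {H K : Type*} [NormedAddCommGroup H] [InnerProductSpace ℝ H] [CompleteSpace H]
  [NormedAddCommGroup K] [InnerProductSpace ℝ K] [CompleteSpace K]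

theorem ContinuousLinearMap.adjoint_apply_apply_of_norm_map {F : H →L[ℝ] K}
    (hF : ∀ x, ‖F x‖ = ‖x‖) (x : H) :
    adjoint F (F x) = x := by
  rw [← comp_apply, F.norm_map_iff_adjoint_comp_self.mp hF]; rfl

theorem norm_sub_map_sq_eq {F : H →L[ℝ] K} (hF : ∀ x, ‖F x‖ = ‖x‖) (u : K) (x x' : H) :
    ‖u - F x'‖ ^ 2 = ‖u - F x‖ ^ 2 + ‖x' - x‖ ^ 2 - 2 * ⟪adjoint F u - x, x' - x⟫ := by
  have hsplit : u - F x' = (u - F x) - F (x' - x) := by rw [map_sub]; abel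
  have hinner : ⟪u - F x, F (x' - x)⟫ = ⟪adjoint F u - x, x' - x⟫ := by
    rw [← adjoint_inner_left, map_sub, adjoint_apply_apply_of_norm_map hF]
  rw [hsplit, norm_sub_sq_real, hF, hinner]
  ring

theorem weighted_norm_sub_sq_add_eq {F : H →L[ℝ] K} (hF : ∀ x, ‖F x‖ = ‖x‖) (β₁ β₂ : ℝ)
    (u₁ : K) (u₂ x x' : H) :
    β₁ / 2 * ‖u₁ - F x'‖ ^ 2 + β₂ / 2 * ‖u₂ - x'‖ ^ 2 =
      β₁ / 2 * ‖u₁ - F x‖ ^ 2 + β₂ / 2 * ‖u₂ - x‖ ^ 2 + (β₁ + β₂) / 2 * ‖x' - x‖ ^ 2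
        - ⟪β₁ • adjoint F u₁ + β₂ • u₂ - (β₁ + β₂) • x, x' - x⟫ := by
  have hid : ‖u₂ - x'‖ ^ 2 = ‖u₂ - x‖ ^ 2 + ‖x' - x‖ ^ 2 - 2 * ⟪u₂ - x, x' - x⟫ := by
    simpa [adjoint_id] using norm_sub_map_sq_eq (F := .id ℝ H) (fun _ => rfl) u₂ x x'
  rw [norm_sub_map_sq_eq hF u₁ x x', hid]
  simp only [inner_sub_left, inner_add_left, real_inner_smul_left]
  ring

end

theorem le_and_eq_imp_of_eq_add_norm_sq {E : Type*} [NormedAddGroup E] {β a a₀ : ℝ} {v : E}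
    (hβ : 0 < β) (h : a = a₀ + β / 2 * ‖v‖ ^ 2) : a₀ ≤ a ∧ (a = a₀ → v = 0) := by
  refine ⟨h ▸ le_add_of_nonneg_right (by positivity), fun ha => ?_⟩
  have : β / 2 * ‖v‖ ^ 2 = 0 := by linarith
  simpa [hβ.ne'] using this

theorem smul_add_one_div_smul {𝕜 E : Type*} [DivisionRing 𝕜] [AddCommMonoid E] [Module 𝕜 E]
    {β : 𝕜} (hβ : β ≠ 0)
    (u v : E) : β • (u + (1 / β) • v) = β • u + v := by
  rw [smul_add, smul_smul, mul_one_div_cancel hβ, one_smul]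

theorem Submodule.sub_mem_orthogonal_of_starProjection_eq {𝕜 E : Type*} [RCLike 𝕜]
    [NormedAddCommGroup E] [InnerProductSpace 𝕜 E] {S : Submodule 𝕜 E} [S.HasOrthogonalProjection]
    {x x' : E} (h : S.starProjection x = S.starProjection x') : x - x' ∈ Sᗮ := by
  have : x - x' = (x - S.starProjection x) - (x' - S.starProjection x') := by rw [h]; abel
  rw [this]
  exact Sᗮ.sub_mem (S.sub_starProjection_mem_orthogonal x) (S.sub_starProjection_mem_orthogonal x')

/-- Closed-form solution of the constrained ADMM `x`-subproblem in the spherical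
inpainting model: for a bounded linear isometry `F` between real Hilbert spaces and
the orthogonal projection `Q` onto a closed (complete) subspace `S`, the unique
minimizer of `x ↦ (β₁/2)‖y − Fx + Λ₁/β₁‖² + (β₂/2)‖z − x + Λ₂/β₂‖²` over the affine
set `{x : Qx = Qg}` is `x* = Qg + (b − Qb)/(β₁ + β₂)` where
`b = β₁·F*y + β₂·z + F*Λ₁ + Λ₂`. -/
theorem admm_x_subproblem_constrained {H K : Type*}
    [NormedAddCommGroup H] [InnerProductSpace ℝ H] [CompleteSpace H]
    [NormedAddCommGroup K] [InnerProductSpace ℝ K] [CompleteSpace K]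
    (F : H →L[ℝ] K) (hF : ∀ x, ‖F x‖ = ‖x‖)
    (S : Submodule ℝ H) [CompleteSpace S]
    (Q : H → H) (hQ : ∀ x, Q x = (S.orthogonalProjectionOnto x : H))
    (β₁ β₂ : ℝ) (hβ₁ : 0 < β₁) (hβ₂ : 0 < β₂)
    (y Λ₁ : K) (z Λ₂ : H) (g : H)
    (b : H)
    (hb : b = β₁ • (ContinuousLinearMap.adjoint F) y + β₂ • z
      + (ContinuousLinearMap.adjoint F) Λ₁ + Λ₂)
    (J : H → ℝ)
    (hJ : ∀ x, J x = (β₁ / 2) * ‖y - F x + (1 / β₁) • Λ₁‖ ^ 2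
      + (β₂ / 2) * ‖z - x + (1 / β₂) • Λ₂‖ ^ 2)
    (xstar : H)
    (hxstar : xstar = Q g + (1 / (β₁ + β₂)) • (b - Q b)) :
    Q xstar = Q g ∧
      ∀ x, Q x = Q g → (J xstar ≤ J x ∧ (J x = J xstar → x = xstar)) := by
  obtain rfl : Q = S.starProjection := funext hQ
  have hβ : 0 < β₁ + β₂ := add_pos hβ₁ hβ₂
  have hb' : β₁ • adjoint F (y + (1 / β₁) • Λ₁) + β₂ • (z + (1 / β₂) • Λ₂) = b := by
    rw [map_add, map_smul, smul_add_one_div_smul hβ₁.ne', smul_add_one_div_smul hβ₂.ne', hb]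
    abel
  have hQxstar : S.starProjection xstar = S.starProjection g :=
    S.eq_starProjection_of_mem_orthogonal' (S.starProjection_apply_mem g)
      (Sᗮ.smul_mem _ (S.sub_starProjection_mem_orthogonal b)) hxstar
  have hres : b - (β₁ + β₂) • xstar ∈ S := by
    have : b - (β₁ + β₂) • xstar = S.starProjection b - (β₁ + β₂) • S.starProjection g := by
      rw [hxstar, smul_add_one_div_smul hβ.ne']
      abel
    rw [this]
    exact S.sub_mem (S.starProjection_apply_mem b) (S.smul_mem _ (S.starProjection_apply_mem g))
  refine ⟨hQxstar, fun x hx => ?_⟩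
  have hincr : x - xstar ∈ Sᗮ :=
    Submodule.sub_mem_orthogonal_of_starProjection_eq (hx.trans hQxstar.symm)
  have hJx : J x = J xstar + (β₁ + β₂) / 2 * ‖x - xstar‖ ^ 2 := by
    simp only [hJ, sub_add_eq_add_sub]
    rw [weighted_norm_sub_sq_add_eq hF β₁ β₂ _ _ xstar x, hb',
      Submodule.inner_right_of_mem_orthogonal hres hincr, sub_zero]
  obtain ⟨hle, heq⟩ := le_and_eq_imp_of_eq_add_norm_sq hβ hJx
  exact ⟨hle, fun h => sub_eq_zero.mp (heq h)⟩
end
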